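/- In the event structure for (y=x; || x=y;), every well-justified configuration contains only labels with value 0 (apart from init); hence (x ≠ 1 ∧ y ≠ 1) is a tautology of this structure. -/
import Mathlib


/-- Locations. -/
inductive Lc where | x | y
deriving DecidableEq

/-- Memory actions over locations `Lc` and natural-number values. -/
inductive Act where
  | init : Act
  | read (l : Lc) (v : ℕ) : Act
  | write (l : Lc) (v : ℕ) : Act
deriving DecidableEq

/-- Events of the event structure for `(y=x; || x=y;)`. -/
inductive Ev where
  | einit | rx0 | rx1 | wy0 | wy1 | ry0 | ry1 | wx0 | wx1
deriving DecidableEq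

open Ev Act Lc

/-- Labelling of events. -/
def lab : Ev → Act
  | einit => .init
  | rx0 => .read .x 0
  | rx1 => .read .x 1
  | wy0 => .write .y 0
  | wy1 => .write .y 1
  | ry0 => .read .y 0
  | ry1 => .read .y 1
  | wx0 => .write .x 0
  | wx1 => .write .x 1

/-- Immediate program order: init < Rx0 < Wy0, init < Rx1 < Wy1,
init < Ry0 < Wx0, init < Ry1 < Wx1. -/
def po : Ev → Ev → Prop := fun d e =>
  (d = einit ∧ (e = rx0 ∨ e = rx1 ∨ e = ry0 ∨ e = ry1)) ∨
  (d = rx0 ∧ e = wy0) ∨ (d = rx1 ∧ e = wy1) ∨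
  (d = ry0 ∧ e = wx0) ∨ (d = ry1 ∧ e = wx1)

/-- Conflict: Rx0 # Rx1 and Ry0 # Ry1, inherited by program-order successors. -/
def confl : Ev → Ev → Prop := fun d e =>
  (d ∈ ({rx0, wy0} : Set Ev) ∧ e ∈ ({rx1, wy1} : Set Ev)) ∨
  (d ∈ ({rx1, wy1} : Set Ev) ∧ e ∈ ({rx0, wy0} : Set Ev)) ∨
  (d ∈ ({ry0, wx0} : Set Ev) ∧ e ∈ ({ry1, wx1} : Set Ev)) ∨
  (d ∈ ({ry1, wx1} : Set Ev) ∧ e ∈ ({ry0, wx0} : Set Ev))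

/-- A configuration: a finite, downward-closed, conflict-free set of events. -/
def IsConfig (C : Set Ev) : Prop :=
  C.Finite ∧ (∀ e ∈ C, ∀ d, po d e → d ∈ C) ∧ (∀ d ∈ C, ∀ e ∈ C, ¬ confl d e)

/-- Justification between labels: a read `R z v` is justified by a write
`W z v` with the same location and value, or (for `v = 0`) by the
initialization action, treated as writing `0` to all locations. -/
def labJust : Act → Act → Prop := fun d e =>
  ∃ z v, e = Act.read z v ∧ (d = Act.write z v ∨ (d = Act.init ∧ v = 0))

/-- Well-justified configurations, generated inductively from the empty set by
adding non-read (write/init) events keeping the set a configuration, or read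
events justified by a write (or init, as a value-0 write) already in the set. -/
inductive WJ : Set Ev → Prop where
  | empty : WJ ∅
  | write {C : Set Ev} {e : Ev} (hC : WJ C) (hcfg : IsConfig (insert e C))
      (hw : ∀ z v, lab e ≠ Act.read z v) : WJ (insert e C)
  | read {C : Set Ev} {e : Ev} (hC : WJ C) (hcfg : IsConfig (insert e C))
      (hr : ∃ z v, lab e = Act.read z v)
      (hj : ∃ d ∈ C, labJust (lab d) (lab e)) : WJ (insert e C)

/-- `A ⊨ (z ≠ 1)`: no read/write label on `z` in `A` has value `1`. -/
def SatNeq (A : Set Act) (z : Lc) (v : ℕ) : Prop :=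
  ∀ a ∈ A, ∀ w : ℕ, (a = Act.read z w ∨ a = Act.write z w) → w ≠ v

lemma wj_no_one (C : Set Ev) (hC : WJ C) :
    rx1 ∉ C ∧ wy1 ∉ C ∧ ry1 ∉ C ∧ wx1 ∉ C := by
  induction hC with
  | empty => simp
  | @write C e hC hcfg hw ih =>
    obtain ⟨h1, h2, h3, h4⟩ := ih
    have hdc := hcfg.2.1
    cases e with
    | rx0 => simp_all [Set.mem_insert_iff]
    | wy0 => simp_all [Set.mem_insert_iff]
    | wx0 => simp_all [Set.mem_insert_iff]
    | einit => simp_all [Set.mem_insert_iff]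
    | rx1 => exact absurd rfl (hw Lc.x 1)
    | ry1 => exact absurd rfl (hw Lc.y 1)
    | ry0 => exact absurd rfl (hw Lc.y 0)
    | wy1 =>
      exfalso
      have : rx1 ∈ insert wy1 C := by
        apply hdc wy1 (Set.mem_insert _ _) rx1
        simp [po]
      rcases this with h | h
      · exact Ev.noConfusion h
      · exact h1 h
    | wx1 =>
      exfalso
      have : ry1 ∈ insert wx1 C := by
        apply hdc wx1 (Set.mem_insert _ _) ry1
        simp [po]
      rcases this with h | h
      · exact Ev.noConfusion h
      · exact h3 h
  | @read C e hC hcfg hr hj ih =>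
    obtain ⟨h1, h2, h3, h4⟩ := ih
    cases e with
    | rx0 => simp_all [Set.mem_insert_iff]
    | ry0 => simp_all [Set.mem_insert_iff]
    | einit => obtain ⟨z, v, h⟩ := hr; exact absurd h (by simp [lab])
    | wy0 => obtain ⟨z, v, h⟩ := hr; exact absurd h (by simp [lab])
    | wy1 => obtain ⟨z, v, h⟩ := hr; exact absurd h (by simp [lab])
    | wx0 => obtain ⟨z, v, h⟩ := hr; exact absurd h (by simp [lab])
    | wx1 => obtain ⟨z, v, h⟩ := hr; exact absurd h (by simp [lab])
    | rx1 =>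
      exfalso
      obtain ⟨d, hd, z, v, hev, hjd⟩ := hj
      have hz : z = Lc.x ∧ v = 1 := by
        simp [lab] at hev; exact ⟨hev.1.symm, hev.2.symm⟩
      obtain ⟨rfl, rfl⟩ := hz
      rcases hjd with h | ⟨_, h⟩
      · cases d <;> simp [lab] at h
        exact h4 hd
      · exact one_ne_zero h
    | ry1 =>
      exfalso
      obtain ⟨d, hd, z, v, hev, hjd⟩ := hj
      have hz : z = Lc.y ∧ v = 1 := by
        simp [lab] at hev; exact ⟨hev.1.symm, hev.2.symm⟩
      obtain ⟨rfl, rfl⟩ := hz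
      rcases hjd with h | ⟨_, h⟩
      · cases d <;> simp [lab] at h
        exact h2 hd
      · exact one_ne_zero h

/-- Every well-justified configuration of the event structure for
`(y=x; || x=y;)` contains only labels with value `0` (apart from `init`);
hence `(x ≠ 1 ∧ y ≠ 1)` is a tautology of this structure. -/
theorem stmt19 (C : Set Ev) (hC : WJ C) :
    (∀ e ∈ C, ∀ z : Lc, ∀ v : ℕ,
      (lab e = Act.read z v ∨ lab e = Act.write z v) → v = 0) ∧
    (SatNeq (lab '' C) Lc.x 1 ∧ SatNeq (lab '' C) Lc.y 1) := by
  obtain ⟨h1, h2, h3, h4⟩ := wj_no_one C hC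
  have main : ∀ e ∈ C, ∀ z : Lc, ∀ v : ℕ,
      (lab e = Act.read z v ∨ lab e = Act.write z v) → v = 0 := by
    intro e he z v hlab
    cases e with
    | einit => rcases hlab with h | h <;> exact absurd h (by simp [lab])
    | rx0 => rcases hlab with h | h <;> simp_all [lab]
    | ry0 => rcases hlab with h | h <;> simp_all [lab]
    | wy0 => rcases hlab with h | h <;> simp_all [lab]
    | wx0 => rcases hlab with h | h <;> simp_all [lab]
    | rx1 => exact absurd he h1
    | wy1 => exact absurd he h2
    | ry1 => exact absurd he h3
    | wx1 => exact absurd he h4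
  refine ⟨main, ?_, ?_⟩ <;>
  · rintro a ⟨e, he, rfl⟩ w hw
    have := main e he _ w hw
    omega
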